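/- With ω± as above, for all (x,y) in R_a \ {(2,0)} (0 < a ≤ 1/10) the partial derivatives satisfy 0 ≤ ∂ω±/∂x < 1, with equality ∂ω₊/∂x = 0 exactly when y = 0 and x < 2 (and ∂ω₋/∂x = 0 exactly when y = 0 and x > 2). -/

import Mathlib

/-!
Differentiating gives `∂ω±/∂x = 8x((1 + 2y²)√Δ ± Φ) / (√Δ r₁⁴)` with
`Φ = -4 + x² + 8y² + 6x²y² + 16x²y⁴`. The identity `((1 + 2y²)√Δ)² - Φ² = 8y²r₁⁴` gives
`|Φ| ≤ (1 + 2y²)√Δ`, with equality only on `y = 0`, so the numerator lies between `0` and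
`16x(1 + 2y²)√Δ`, and `16x(1 + 2y²) < r₁⁴` once `x ≥ 1`. On `y = 0` we have `√Δ = |x² - 4|` and
`Φ = x² - 4`, and the sign of `x² - 4` decides which of the two numerators vanishes.
-/

noncomputable def Delta (x y : ℝ) : ℝ := ((x+2)^2 + 8*x^2*y^2) * ((x-2)^2 + 8*x^2*y^2)
noncomputable def r1sq (x y : ℝ) : ℝ := 4 + x^2 + 4*x^2*y^2

noncomputable def omegaP (x y : ℝ) : ℝ := (-4 + x^2 + Real.sqrt (Delta x y)) / (2 * r1sq x y)
noncomputable def omegaM (x y : ℝ) : ℝ := (-4 + x^2 - Real.sqrt (Delta x y)) / (2 * r1sq x y)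

open Real

lemma r1sq_pos (x y : ℝ) : 0 < r1sq x y := by unfold r1sq; positivity

lemma Delta_pos {x y : ℝ} (hx : 0 ≤ x) (hp : (x, y) ≠ (2, 0)) : 0 < Delta x y := by
  unfold Delta
  have h2 : 0 < (x - 2) ^ 2 + 8 * x ^ 2 * y ^ 2 := by
    by_contra! h
    have hx2 : x = 2 := by nlinarith [sq_nonneg (x - 2), sq_nonneg (x * y)]
    subst hx2
    exact hp (by simp only [Prod.mk.injEq, true_and]; nlinarith [sq_nonneg y])
  positivity

noncomputable def Phi (x y : ℝ) : ℝ := -4 + x^2 + 8*y^2 + 6*x^2*y^2 + 16*x^2*y^4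

lemma sq_mul_sqrt_Delta_sub_Phi_sq (x y : ℝ) :
    ((1 + 2*y^2) * √(Delta x y))^2 - Phi x y ^ 2 = 8 * y^2 * r1sq x y ^ 2 := by
  rw [mul_pow, sq_sqrt (by unfold Delta; positivity)]
  unfold Delta Phi r1sq
  ring

lemma abs_Phi_le (x y : ℝ) : |Phi x y| ≤ (1 + 2*y^2) * √(Delta x y) :=
  abs_le_of_sq_le_sq (by nlinarith [sq_mul_sqrt_Delta_sub_Phi_sq x y, sq_nonneg (y * r1sq x y)])
    (by positivity)

lemma eq_zero_of_sq_mul_sqrt_Delta_eq_Phi_sq {x y : ℝ}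
    (h : ((1 + 2*y^2) * √(Delta x y))^2 = Phi x y ^ 2) : y = 0 := by
  have hr := r1sq_pos x y
  have : y ^ 2 * r1sq x y ^ 2 = 0 := by linarith [sq_mul_sqrt_Delta_sub_Phi_sq x y]
  simpa [hr.ne'] using this

lemma sqrt_Delta_zero (x : ℝ) : √(Delta x 0) = |x^2 - 4| := by
  rw [← sqrt_sq_eq_abs]; congr 1; unfold Delta; ring

lemma Phi_zero (x : ℝ) : Phi x 0 = x^2 - 4 := by unfold Phi; ring

lemma add_Phi_eq_zero_iff {x y : ℝ} (hx : 0 ≤ x) :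
    (1 + 2*y^2) * √(Delta x y) + Phi x y = 0 ↔ y = 0 ∧ x ≤ 2 := by
  constructor
  · intro h
    obtain rfl : y = 0 :=
      eq_zero_of_sq_mul_sqrt_Delta_eq_Phi_sq (by rw [eq_neg_of_add_eq_zero_left h]; ring)
    rw [sqrt_Delta_zero, Phi_zero] at h
    exact ⟨rfl, by nlinarith [le_abs_self (x^2 - 4), neg_abs_le (x^2 - 4)]⟩
  · rintro ⟨rfl, hx2⟩
    rw [sqrt_Delta_zero, Phi_zero, abs_of_nonpos (by nlinarith)]
    ring

lemma sub_Phi_eq_zero_iff {x y : ℝ} (hx : 0 ≤ x) :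
    (1 + 2*y^2) * √(Delta x y) - Phi x y = 0 ↔ y = 0 ∧ 2 ≤ x := by
  constructor
  · intro h
    obtain rfl : y = 0 := eq_zero_of_sq_mul_sqrt_Delta_eq_Phi_sq (by rw [sub_eq_zero.mp h])
    rw [sqrt_Delta_zero, Phi_zero] at h
    exact ⟨rfl, by nlinarith [le_abs_self (x^2 - 4), neg_abs_le (x^2 - 4)]⟩
  · rintro ⟨rfl, hx2⟩
    rw [sqrt_Delta_zero, Phi_zero, abs_of_nonneg (by nlinarith)]
    ring

lemma sixteen_mul_lt_r1sq_sq {x : ℝ} (hx : 1 ≤ x) (y : ℝ) :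
    16 * x * (1 + 2*y^2) < r1sq x y ^ 2 := by
  unfold r1sq
  nlinarith [sq_nonneg y, sq_nonneg (x * y), sq_nonneg (x * y^2),
    mul_nonneg (sub_nonneg.2 hx) (sq_nonneg y)]

noncomputable def omega (σ x y : ℝ) : ℝ := (-4 + x^2 + σ * √(Delta x y)) / (2 * r1sq x y)

lemma omegaP_eq_omega : omegaP = omega 1 := by
  funext x y; simp only [omegaP, omega, one_mul]

lemma omegaM_eq_omega : omegaM = omega (-1) := by
  funext x y; simp only [omegaM, omega, neg_one_mul, ← sub_eq_add_neg]

noncomputable def omegaSlope (σ x y : ℝ) : ℝ :=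
  8 * x * ((1 + 2*y^2) * √(Delta x y) + σ * Phi x y) / (√(Delta x y) * r1sq x y ^ 2)

lemma hasDerivAt_Delta (x y : ℝ) :
    HasDerivAt (Delta · y) (4*x*(x^2-4) + 64*x*y^2*(x^2+2) + 256*x^3*y^4) x := by
  have hid := hasDerivAt_id' x
  have hquad := (hid.fun_pow 2).const_mul 8 |>.mul_const (y^2)
  have h := (((hid.add_const 2).fun_pow 2).fun_add hquad).fun_mul
    (((hid.sub_const 2).fun_pow 2).fun_add hquad)
  exact h.congr_deriv (by push_cast; ring)

lemma hasDerivAt_r1sq (x y : ℝ) : HasDerivAt (r1sq · y) (2*x + 8*x*y^2) x := by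
  have hid := hasDerivAt_id' x
  have h := ((hid.fun_pow 2).const_add 4).fun_add ((hid.fun_pow 2).const_mul 4 |>.mul_const (y^2))
  exact h.congr_deriv (by push_cast; ring)

lemma hasDerivAt_omega (σ : ℝ) {x y : ℝ} (hΔ : 0 < Delta x y) :
    HasDerivAt (omega σ · y) (omegaSlope σ x y) x := by
  have hs : 0 < √(Delta x y) := sqrt_pos.mpr hΔ
  have hr := r1sq_pos x y
  have hnum := (((hasDerivAt_id' x).fun_pow 2).const_add (-4)).fun_add
    (((hasDerivAt_Delta x y).sqrt hΔ.ne').const_mul σ)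
  refine (hnum.fun_div ((hasDerivAt_r1sq x y).const_mul 2) (by positivity)).congr_deriv ?_
  have hsq : √(Delta x y) ^ 2 = Delta x y := sq_sqrt hΔ.le
  unfold omegaSlope Phi r1sq
  generalize √(Delta x y) = s at *
  unfold Delta at hsq
  field_simp
  linear_combination (-4 * x * σ * (1 + 4 * y^2)) * hsq

lemma abs_mul_Phi_le {σ : ℝ} (hσ : |σ| ≤ 1) (x y : ℝ) :
    |σ * Phi x y| ≤ (1 + 2*y^2) * √(Delta x y) := by
  rw [abs_mul]
  exact (mul_le_of_le_one_left (abs_nonneg _) hσ).trans (abs_Phi_le x y)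

lemma omegaSlope_nonneg {σ x : ℝ} (hσ : |σ| ≤ 1) (hx : 0 ≤ x) (y : ℝ) :
    0 ≤ omegaSlope σ x y := by
  have := (abs_le.mp (abs_mul_Phi_le hσ x y)).1
  have : 0 ≤ (1 + 2*y^2) * √(Delta x y) + σ * Phi x y := by linarith
  unfold omegaSlope
  positivity

lemma omegaSlope_lt_one {σ x y : ℝ} (hσ : |σ| ≤ 1) (hx : 1 ≤ x) (hΔ : 0 < Delta x y) :
    omegaSlope σ x y < 1 := by
  have hs : 0 < √(Delta x y) := sqrt_pos.mpr hΔ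
  have hσΦ := (abs_le.mp (abs_mul_Phi_le hσ x y)).2
  unfold omegaSlope
  rw [div_lt_one (mul_pos hs (pow_pos (r1sq_pos x y) 2))]
  calc 8 * x * ((1 + 2*y^2) * √(Delta x y) + σ * Phi x y)
      ≤ 8 * x * (2 * ((1 + 2*y^2) * √(Delta x y))) := by gcongr; linarith
    _ = (16 * x * (1 + 2*y^2)) * √(Delta x y) := by ring
    _ < r1sq x y ^ 2 * √(Delta x y) := by gcongr; exact sixteen_mul_lt_r1sq_sq hx y
    _ = √(Delta x y) * r1sq x y ^ 2 := mul_comm _ _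

lemma omegaSlope_eq_zero_iff {σ x y : ℝ} (hx : 0 < x) (hΔ : 0 < Delta x y) :
    omegaSlope σ x y = 0 ↔ (1 + 2*y^2) * √(Delta x y) + σ * Phi x y = 0 := by
  have hs : 0 < √(Delta x y) := sqrt_pos.mpr hΔ
  simp [omegaSlope, hx.ne', hs.ne', (r1sq_pos x y).ne']

theorem stmt_11_general (a : ℝ) (ha : a ≤ 1/10) (x y : ℝ)
    (hx : 2 - a ≤ x ∧ x ≤ 2 + a) (hp : (x, y) ≠ (2, 0)) :
    (0 ≤ deriv (fun t => omegaP t y) x ∧ deriv (fun t => omegaP t y) x < 1) ∧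
    (0 ≤ deriv (fun t => omegaM t y) x ∧ deriv (fun t => omegaM t y) x < 1) ∧
    (deriv (fun t => omegaP t y) x = 0 ↔ y = 0 ∧ x < 2) ∧
    (deriv (fun t => omegaM t y) x = 0 ↔ y = 0 ∧ 2 < x) := by
  have hx1 : 1 ≤ x := by linarith [hx.1]
  have hΔ : 0 < Delta x y := Delta_pos (by linarith) hp
  have hσP : |(1 : ℝ)| ≤ 1 := by norm_num
  have hσM : |(-1 : ℝ)| ≤ 1 := by norm_num
  rw [omegaP_eq_omega, omegaM_eq_omega, (hasDerivAt_omega 1 hΔ).deriv,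
    (hasDerivAt_omega (-1) hΔ).deriv, omegaSlope_eq_zero_iff (by linarith) hΔ,
    omegaSlope_eq_zero_iff (by linarith) hΔ, one_mul, neg_one_mul, ← sub_eq_add_neg,
    add_Phi_eq_zero_iff (by linarith), sub_Phi_eq_zero_iff (by linarith)]
  refine ⟨⟨omegaSlope_nonneg hσP (by linarith) y, omegaSlope_lt_one hσP hx1 hΔ⟩,
    ⟨omegaSlope_nonneg hσM (by linarith) y, omegaSlope_lt_one hσM hx1 hΔ⟩,
    and_congr_right fun hy0 => ?_, and_congr_right fun hy0 => ?_⟩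
  · exact Ne.le_iff_lt fun h => hp (by rw [h, hy0])
  · exact Ne.le_iff_lt fun h => hp (by rw [← h, hy0])

theorem stmt_11 (a : ℝ) (ha0 : 0 < a) (ha : a ≤ 1/10) (x y : ℝ)
    (hx : 2 - a ≤ x ∧ x ≤ 2 + a) (hy : |y| ≤ a/10) (hp : (x, y) ≠ (2, 0)) :
    (0 ≤ deriv (fun t => omegaP t y) x ∧ deriv (fun t => omegaP t y) x < 1) ∧
    (0 ≤ deriv (fun t => omegaM t y) x ∧ deriv (fun t => omegaM t y) x < 1) ∧
    (deriv (fun t => omegaP t y) x = 0 ↔ y = 0 ∧ x < 2) ∧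
    (deriv (fun t => omegaM t y) x = 0 ↔ y = 0 ∧ 2 < x) :=
  stmt_11_general a ha x y hx hp
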